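/- In the multivariate polynomial ring ℝ[X, L, E] (with X, L, E representing x, λ₁, ε), define h = X − X³ − E·(X + L − 4X³ − 3X²L) + E²·(2X + L) and k = L + E·(3X²L − L) + E²·(2L + 6XL²) − 5LE³, and define the residual R_k = (∂k/∂X)·E·(h + L) + (∂k/∂L)·E·(3X² − 1)·k − (k − L). Then every monomial occurring in R_k (i.e., every element of its support) has total degree at least 4. -/
import Mathlib

open MvPolynomial

lemma pd_ofNat (i : Fin 3) (n : ℕ) [n.AtLeastTwo] :
    pderiv i (OfNat.ofNat n : MvPolynomial (Fin 3) ℝ) = 0 := by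
  have : (OfNat.ofNat n : MvPolynomial (Fin 3) ℝ)
      = ((OfNat.ofNat n : ℕ) : MvPolynomial (Fin 3) ℝ) := by norm_cast
  rw [this]; exact Derivation.map_natCast _ _

set_option maxHeartbeats 2000000 in
/-- The fourth-order polynomial center manifold approximations `h`, `k` for the rescaled
layer equations of the Duffing variational system satisfy the center manifold invariance
condition for `k` up to terms of total degree at least 4 (variables `X ↔ x`, `L ↔ λ₁`,
`E ↔ ε`, each counted with weight 1). -/
theorem stmt15 (h k Rk : MvPolynomial (Fin 3) ℝ)
    (hh : h = X 0 - (X 0) ^ 3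
        - X 2 * (X 0 + X 1 - 4 * (X 0) ^ 3 - 3 * (X 0) ^ 2 * X 1)
        + (X 2) ^ 2 * (2 * X 0 + X 1))
    (hk : k = X 1 + X 2 * (3 * (X 0) ^ 2 * X 1 - X 1)
        + (X 2) ^ 2 * (2 * X 1 + 6 * X 0 * (X 1) ^ 2)
        - 5 * X 1 * (X 2) ^ 3)
    (hRk : Rk = pderiv (0 : Fin 3) k * (X 2 * (h + X 1))
        + pderiv (1 : Fin 3) k * (X 2 * (3 * (X 0) ^ 2 - 1) * k)
        - (k - X 1)) :
    ∀ d ∈ Rk.support, 4 ≤ d.sum fun _ e => e := by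
  set Q : MvPolynomial (Fin 3) ℝ := (14 * (X 2)^2
      + (-14) * (X 2)^3
      + 20 * (X 2)^4
      + (-25) * (X 2)^5
      + 6 * (X 1)^2 * X 2
      + (-6) * (X 1)^2 * (X 2)^2
      + 6 * (X 1)^2 * (X 2)^3
      + (-18) * X 0 * X 1 * X 2
      + 18 * X 0 * X 1 * (X 2)^2
      + (-24) * X 0 * X 1 * (X 2)^3
      + 90 * X 0 * X 1 * (X 2)^4
      + (-6) * (X 0)^2
      + 15 * (X 0)^2 * X 2
      + (-42) * (X 0)^2 * (X 2)^2
      + 72 * (X 0)^2 * (X 2)^3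
      + (-60) * (X 0)^2 * (X 2)^4
      + 75 * (X 0)^2 * (X 2)^5
      + 18 * (X 0)^2 * (X 1)^2 * (X 2)^2
      + (-72) * (X 0)^2 * (X 1)^2 * (X 2)^3
      + 66 * (X 0)^3 * X 1 * X 2
      + (-84) * (X 0)^3 * X 1 * (X 2)^2
      + 108 * (X 0)^3 * X 1 * (X 2)^3
      + (-270) * (X 0)^3 * X 1 * (X 2)^4
      + 12 * (X 0)^4
      + (-3) * (X 0)^4 * X 2
      + 36 * (X 0)^4 * (X 2)^2
      + (-90) * (X 0)^4 * (X 2)^3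
      + 216 * (X 0)^4 * (X 1)^2 * (X 2)^3
      + 162 * (X 0)^5 * X 1 * (X 2)^2
      + 27 * (X 0)^6 * X 2 : MvPolynomial (Fin 3) ℝ) with hQdef
  have hp0 : pderiv (0 : Fin 3) k = 6 * X 0 * X 1 * X 2 + 6 * (X 1)^2 * (X 2)^2 := by
    subst hk
    simp [Pi.single_apply, pd_ofNat 0 2, pd_ofNat 0 3, pd_ofNat 0 5, pd_ofNat 0 6,
      pd_ofNat 1 2, pd_ofNat 1 3, pd_ofNat 1 5, pd_ofNat 1 6]
    ring
  have hp1 : pderiv (1 : Fin 3) k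
      = 1 + X 2 * (3 * (X 0)^2 - 1) + (X 2)^2 * (2 + 12 * X 0 * X 1) - 5 * (X 2)^3 := by
    subst hk
    simp [Pi.single_apply, pd_ofNat 0 2, pd_ofNat 0 3, pd_ofNat 0 5, pd_ofNat 0 6,
      pd_ofNat 1 2, pd_ofNat 1 3, pd_ofNat 1 5, pd_ofNat 1 6]
    ring
  have hfac : Rk = X 1 * (X 2 * (X 2 * Q)) := by
    rw [hRk, hp0, hp1, hh, hk, hQdef]; ring
  have hc0 : constantCoeff Q = 0 := by
    rw [hQdef]; simp
  have key : ∀ (i : Fin 3) (b : Fin 3 →₀ ℕ),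
      ((Finsupp.single i 1 + b).sum fun _ e => e) = 1 + b.sum fun _ e => e := by
    intro i b
    rw [Finsupp.sum_add_index' (fun _ => rfl) (fun _ _ _ => rfl),
      Finsupp.sum_single_index rfl]
  intro d hd
  rw [hfac] at hd
  simp only [support_X_mul, Finset.mem_map, addLeftEmbedding_apply] at hd
  obtain ⟨b3, ⟨b2, ⟨b1, hb1, rfl⟩, rfl⟩, rfl⟩ := hd
  have hb1ne : b1 ≠ 0 := by
    rintro rfl
    exact (mem_support_iff.mp hb1) hc0
  have hsum : 1 ≤ b1.sum fun _ e => e := by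
    rcases Finsupp.ne_iff.mp hb1ne with ⟨i, hi⟩
    simp only [Finsupp.coe_zero, Pi.zero_apply] at hi
    calc 1 ≤ b1 i := Nat.one_le_iff_ne_zero.mpr hi
    _ ≤ b1.sum fun _ e => e :=
      Finset.single_le_sum (fun _ _ => Nat.zero_le _) (Finsupp.mem_support_iff.mpr hi)
  rw [key, key, key]
  omega
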